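/- Let G be an r-SPTG with Val_G(ℓ,ν) ∈ ℝ for all configurations, let ℓ be a non-urgent non-final location of Min and ℓ′ a non-urgent non-final location of Max. Then for all 0 ≤ ν < ν′ ≤ r, slope^ℓ_G(ν,ν′) ≥ −π(ℓ) and slope^{ℓ′}_G(ν,ν′) ≤ −π(ℓ′). -/

import Mathlib

/-!
Formalization of (simple) priced timed games (SPTGs) following
"One-Clock Priced Timed Games with Negative Weights"
(Brihaye, Geeraerts, Haddad, Lefaucheux, Monmege).
-/

noncomputable section
open scoped Classical

/-- `f` decomposes, on `[a,b]`, into `n` affine pieces with rational slopes and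
rational interior cutpoints.  (This entails in particular that `f` is finite and
continuous on `[a,b]`.) -/
def AffinePiecesOn (f : ℝ → EReal) (a b : ℝ) (n : ℕ) : Prop :=
  ∃ c : ℕ → ℝ, c 0 = a ∧ c n = b ∧ (∀ i < n, c i < c (i + 1)) ∧
    (∀ i, 0 < i → i < n → ∃ q : ℚ, c i = (q : ℝ)) ∧
    (∀ i < n, ∃ (m : ℚ) (q : ℝ), ∀ x : ℝ, c i ≤ x → x ≤ c (i + 1) →
      f x = (((m : ℝ) * x + q : ℝ) : EReal))

/-- A cost function over `[a,b]`: either constantly `+∞`, or constantly `-∞`, or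
continuous and piecewise affine with rational slopes and finitely many rational
cutpoints. -/
def CostFunctionOn (f : ℝ → EReal) (a b : ℝ) : Prop :=
  (∀ x : ℝ, a ≤ x → x ≤ b → f x = ⊤) ∨ (∀ x : ℝ, a ≤ x → x ≤ b → f x = ⊥) ∨
    ∃ n : ℕ, AffinePiecesOn f a b n

/-- `x` and `y` lie in the same interval (open interval or singleton) of the
partition of the line induced by the finite set of points `P`. -/
def sameInt (P : Finset ℚ) (x y : ℝ) : Prop :=
  ∀ p ∈ P, (((p : ℝ) < x) ↔ ((p : ℝ) < y)) ∧ ((x < (p : ℝ)) ↔ (y < (p : ℝ)))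

/-- An `r`-SPTG (simple priced timed game). Locations are partitioned into those of
player Min, player Max and the final ones; some non-final locations are urgent;
transitions carry integer weights, non-final locations carry integer rates, final
locations carry affine final cost functions.  The clock stays in `[0,r]`. -/
structure SPTG where
  Loc : Type
  [fintypeLoc : Fintype Loc]
  [decEqLoc : DecidableEq Loc]
  isMin : Loc → Prop
  isMax : Loc → Prop
  isFin : Loc → Prop
  partition : ∀ ℓ, (isMin ℓ ∧ ¬isMax ℓ ∧ ¬isFin ℓ) ∨ (¬isMin ℓ ∧ isMax ℓ ∧ ¬isFin ℓ) ∨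
    (¬isMin ℓ ∧ ¬isMax ℓ ∧ isFin ℓ)
  isUrg : Loc → Prop
  urg_not_fin : ∀ ℓ, isUrg ℓ → ¬isFin ℓ
  trans : Loc → Loc → Prop
  trans_not_fin : ∀ ℓ ℓ', trans ℓ ℓ' → ¬isFin ℓ
  r : ℝ
  r_nonneg : 0 ≤ r
  r_le_one : r ≤ 1
  finSlope : Loc → ℝ
  finIntercept : Loc → ℝ
  locWt : Loc → ℤ
  transWt : Loc → Loc → ℤ

attribute [instance] SPTG.fintypeLoc SPTG.decEqLoc

namespace SPTG

/-- The final cost functions have rational coefficients (this is part of the paper's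
definition of an SPTG). -/
def ratFinal (G : SPTG) : Prop :=
  ∀ ℓ : G.Loc, (∃ a : ℚ, G.finSlope ℓ = (a : ℝ)) ∧ ∃ b : ℚ, G.finIntercept ℓ = (b : ℝ)

/-- The final cost function `φ_ℓ`. -/
def finalCost (G : SPTG) (ℓ : G.Loc) (ν : ℝ) : ℝ := G.finSlope ℓ * ν + G.finIntercept ℓ

/-- A configuration: a location together with a clock value. -/
abbrev Conf (G : SPTG) := G.Loc × ℝ

def validConf (G : SPTG) (s : G.Conf) : Prop := 0 ≤ s.2 ∧ s.2 ≤ G.r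

/-- A move: a delay `t` together with a transition (determined by its target). -/
structure Move (G : SPTG) where
  t : ℝ
  tgt : G.Loc

/-- The move `m` is available from configuration `s`. -/
def canMove (G : SPTG) (s : G.Conf) (m : G.Move) : Prop :=
  0 ≤ m.t ∧ s.2 + m.t ≤ G.r ∧ G.trans s.1 m.tgt ∧ (G.isUrg s.1 → m.t = 0)

/-- Cost `π(δ) + t·π(ℓ)` of a move. -/
def moveCost (G : SPTG) (s : G.Conf) (m : G.Move) : ℝ :=
  (G.transWt s.1 m.tgt : ℝ) + m.t * (G.locWt s.1 : ℝ)

def applyMove (G : SPTG) (s : G.Conf) (m : G.Move) : G.Conf := (m.tgt, s.2 + m.t)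

def deadlock (G : SPTG) (s : G.Conf) : Prop := ¬∃ m : G.Move, G.canMove s m

/-- A finite play is represented by its initial configuration together with the
list of successive moves; `ValidFrom s l` states that all these moves are legal. -/
def ValidFrom (G : SPTG) : G.Conf → List G.Move → Prop
  | _, [] => True
  | s, m :: l => G.canMove s m ∧ ValidFrom G (G.applyMove s m) l

/-- Last configuration of a finite play. -/
def endConf (G : SPTG) (s : G.Conf) (l : List G.Move) : G.Conf := l.foldl G.applyMove s

/-- Sum of the weights of the discrete transitions taken along a finite play. -/
def transWtSum (G : SPTG) : G.Conf → List G.Move → ℤ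
  | _, [] => 0
  | s, m :: l => G.transWt s.1 m.tgt + transWtSum G (G.applyMove s m) l

/-- Price of a finite play: the accumulated costs of its moves, plus the final cost
function evaluated at the last configuration if its location is final. -/
def finPrice (G : SPTG) : G.Conf → List G.Move → ℝ
  | s, [] => if G.isFin s.1 then G.finalCost s.1 s.2 else 0
  | s, m :: l => G.moveCost s m + finPrice G (G.applyMove s m) l

/-- A strategy of Min: it prescribes a legal move to every finite play ending in a
non-deadlock configuration owned by Min. -/
structure MinStrategy (G : SPTG) where
  move : G.Conf → List G.Move → Option G.Move
  legal : ∀ s l, G.validConf s → G.ValidFrom s l → G.isMin (G.endConf s l).1 →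
    ¬G.deadlock (G.endConf s l) → ∃ m, move s l = some m ∧ G.canMove (G.endConf s l) m

/-- A strategy of Max. -/
structure MaxStrategy (G : SPTG) where
  move : G.Conf → List G.Move → Option G.Move
  legal : ∀ s l, G.validConf s → G.ValidFrom s l → G.isMax (G.endConf s l).1 →
    ¬G.deadlock (G.endConf s l) → ∃ m, move s l = some m ∧ G.canMove (G.endConf s l) m

/-- One step of the play induced by a pair of strategies. -/
def step (G : SPTG) (σmin : MinStrategy G) (σmax : MaxStrategy G) (s : G.Conf)
    (l : List G.Move) : List G.Move :=
  if G.deadlock (G.endConf s l) then l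
  else if G.isMin (G.endConf s l).1 then
    match σmin.move s l with
    | some m => l ++ [m]
    | none => l
  else
    match σmax.move s l with
    | some m => l ++ [m]
    | none => l

/-- The successive finite prefixes of the unique play determined by an initial
configuration and a pair of strategies. -/
def hist (G : SPTG) (σmin : MinStrategy G) (σmax : MaxStrategy G) (s : G.Conf) :
    ℕ → List G.Move
  | 0 => []
  | n + 1 => G.step σmin σmax s (hist G σmin σmax s n)

/-- Price of the completed play determined by an initial configuration and a pair of
strategies: the price of the play if it reaches a final location, `+∞` otherwise. -/
def playCost (G : SPTG) (s : G.Conf) (σmin : MinStrategy G) (σmax : MaxStrategy G) :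
    EReal :=
  if h : ∃ n, G.isFin (G.endConf s (G.hist σmin σmax s n)).1 then
    ((G.finPrice s (G.hist σmin σmax s (Nat.find h)) : ℝ) : EReal)
  else ⊤

/-- Upper value. -/
def upperVal (G : SPTG) (s : G.Conf) : EReal :=
  ⨅ σmin : MinStrategy G, ⨆ σmax : MaxStrategy G, G.playCost s σmin σmax

/-- Lower value. -/
def lowerVal (G : SPTG) (s : G.Conf) : EReal :=
  ⨆ σmax : MaxStrategy G, ⨅ σmin : MinStrategy G, G.playCost s σmin σmax

/-- The value of the game (SPTGs are determined). -/
def val (G : SPTG) (ℓ : G.Loc) (ν : ℝ) : EReal := G.upperVal (ℓ, ν)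

/-- The finite play `(s, l)` is consistent with the Min strategy `σ`. -/
def consistentMin (G : SPTG) (σ : MinStrategy G) (s : G.Conf) (l : List G.Move) : Prop :=
  ∀ (l₁ : List G.Move) (m : G.Move) (l₂ : List G.Move), l = l₁ ++ m :: l₂ →
    G.isMin (G.endConf s l₁).1 → σ.move s l₁ = some m

/-- The finite play `(s, l)` is consistent with the Max strategy `σ`. -/
def consistentMax (G : SPTG) (σ : MaxStrategy G) (s : G.Conf) (l : List G.Move) : Prop :=
  ∀ (l₁ : List G.Move) (m : G.Move) (l₂ : List G.Move), l = l₁ ++ m :: l₂ →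
    G.isMax (G.endConf s l₁).1 → σ.move s l₁ = some m

/-- There is an infinite play from `s` consistent with the Min strategy `σ`. -/
def infConsMin (G : SPTG) (σ : MinStrategy G) (s : G.Conf) : Prop :=
  ∃ ρ : ℕ → G.Move, ∀ n : ℕ,
    G.ValidFrom s (List.ofFn fun i : Fin n => ρ i) ∧
    G.consistentMin σ s (List.ofFn fun i : Fin n => ρ i)

/-- `Cost(s, σ_Min)`: the supremum of the prices of the completed plays from `s`
consistent with `σ_Min` (finite completed plays end in a deadlock; they have price
`+∞` unless they end in a final location; infinite plays have price `+∞`). -/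
def minCost (G : SPTG) (σ : MinStrategy G) (s : G.Conf) : EReal :=
  (⨆ l : { l : List G.Move //
      G.ValidFrom s l ∧ G.consistentMin σ s l ∧ G.deadlock (G.endConf s l) },
    if G.isFin (G.endConf s l.1).1 then ((G.finPrice s l.1 : ℝ) : EReal) else ⊤) ⊔
  (if G.infConsMin σ s then (⊤ : EReal) else ⊥)

/-- `Cost(s, σ_Max)`: the infimum of the prices of the completed plays from `s`
consistent with `σ_Max`. -/
def maxCost (G : SPTG) (σ : MaxStrategy G) (s : G.Conf) : EReal :=
  ⨅ l : { l : List G.Move //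
      G.ValidFrom s l ∧ G.consistentMax σ s l ∧ G.deadlock (G.endConf s l) },
    if G.isFin (G.endConf s l.1).1 then ((G.finPrice s l.1 : ℝ) : EReal) else ⊤

/-- A finite positional (FP-)strategy: a memoryless strategy given by a function `f`
of the current configuration, together with, for each location, finitely many
rational endpoints `0 = ν_0 < ν_1 < ⋯ < ν_k = r` (all belonging to `pts`) such that
on each open interval and at each endpoint the strategy plays the same move, which is
either a fixed transition taken immediately or waiting until the next endpoint and
then taking a fixed transition. -/
structure FPStrategy (G : SPTG) where
  f : G.Conf → Option G.Move
  pts : Finset ℚ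
  zero_mem : (0 : ℚ) ∈ pts
  r_mem : ∃ q ∈ pts, (q : ℝ) = G.r
  pts_range : ∀ q ∈ pts, (0 : ℝ) ≤ (q : ℝ) ∧ (q : ℝ) ≤ G.r
  fp : ∀ ℓ : G.Loc, ∃ (k : ℕ) (ν : ℕ → ℚ) (δ : ℕ → G.Loc),
    (∀ i ≤ k, ν i ∈ pts) ∧ ν 0 = 0 ∧ ((ν k : ℝ) = G.r) ∧ (∀ i < k, ν i < ν (i + 1)) ∧
    (∀ i, 1 ≤ i → i ≤ k →
      (∀ x : ℝ, (ν (i - 1) : ℝ) < x → x < (ν i : ℝ) →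
        f (ℓ, x) = some ⟨0, δ (2 * i - 1)⟩) ∨
      (∀ x : ℝ, (ν (i - 1) : ℝ) < x → x < (ν i : ℝ) →
        f (ℓ, x) = some ⟨(ν i : ℝ) - x, δ (2 * i - 1)⟩)) ∧
    (∀ i < k, f (ℓ, (ν i : ℝ)) = some ⟨0, δ (2 * i)⟩ ∨
      f (ℓ, (ν i : ℝ)) = some ⟨(ν (i + 1) : ℝ) - (ν i : ℝ), δ (2 * i)⟩) ∧
    f (ℓ, (ν k : ℝ)) = some ⟨0, δ (2 * k)⟩

namespace FPStrategy

variable {G : SPTG}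

/-- `|σ| = |Int(σ)|`: the number of intervals (singletons and open intervals)
generated by the points of `σ`. -/
def size (σ : FPStrategy G) : ℕ := 2 * σ.pts.card - 1

/-- `σ` prescribes a legal move wherever Min has to play. -/
def legalMin (σ : FPStrategy G) : Prop :=
  ∀ s : G.Conf, G.validConf s → G.isMin s.1 → ¬G.deadlock s →
    ∃ m, σ.f s = some m ∧ G.canMove s m

/-- `σ` prescribes a legal move wherever Max has to play. -/
def legalMax (σ : FPStrategy G) : Prop :=
  ∀ s : G.Conf, G.validConf s → G.isMax s.1 → ¬G.deadlock s →
    ∃ m, σ.f s = some m ∧ G.canMove s m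

/-- The finite play `(s, l)` is consistent with `σ` viewed as a Min strategy. -/
def consMin (σ : FPStrategy G) (s : G.Conf) (l : List G.Move) : Prop :=
  ∀ (l₁ : List G.Move) (m : G.Move) (l₂ : List G.Move), l = l₁ ++ m :: l₂ →
    G.isMin (G.endConf s l₁).1 → σ.f (G.endConf s l₁) = some m

/-- The finite play `(s, l)` is consistent with `σ` viewed as a Max strategy. -/
def consMax (σ : FPStrategy G) (s : G.Conf) (l : List G.Move) : Prop :=
  ∀ (l₁ : List G.Move) (m : G.Move) (l₂ : List G.Move), l = l₁ ++ m :: l₂ →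
    G.isMax (G.endConf s l₁).1 → σ.f (G.endConf s l₁) = some m

/-- An NC-strategy of Min: an FP-strategy such that along every cycle consistent
with it whose endpoints have clock values in the same interval of `Int(σ)`, the sum
of the weights of the discrete transitions is at most `-1`. -/
def isNC (σ : FPStrategy G) : Prop :=
  σ.legalMin ∧
  ∀ (ℓ : G.Loc) (ν : ℝ) (l : List G.Move), l ≠ [] →
    G.ValidFrom (ℓ, ν) l → σ.consMin (ℓ, ν) l → (G.endConf (ℓ, ν) l).1 = ℓ →
    sameInt σ.pts ν (G.endConf (ℓ, ν) l).2 → G.transWtSum (ℓ, ν) l ≤ -1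

/-- The fake value of `σ` from `s`: the supremum of the prices of the plays from `s`
consistent with `σ` that reach a final location (`sup ∅ = -∞`). -/
def fakeVal (σ : FPStrategy G) (s : G.Conf) : EReal :=
  ⨆ l : { l : List G.Move //
      G.ValidFrom s l ∧ σ.consMin s l ∧ G.isFin (G.endConf s l).1 },
    ((G.finPrice s l.1 : ℝ) : EReal)

/-- `Cost(s, σ)` for `σ` viewed as a Max strategy. -/
def maxCost (σ : FPStrategy G) (s : G.Conf) : EReal :=
  ⨅ l : { l : List G.Move //
      G.ValidFrom s l ∧ σ.consMax s l ∧ G.deadlock (G.endConf s l) },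
    if G.isFin (G.endConf s l.1).1 then ((G.finPrice s l.1 : ℝ) : EReal) else ⊤

end FPStrategy

/-- `w_T`: the largest absolute value of a transition weight. -/
def wT (G : SPTG) : ℝ :=
  ⨆ p : G.Loc × G.Loc, if G.trans p.1 p.2 then |(G.transWt p.1 p.2 : ℝ)| else 0

/-- `w_L`: the largest absolute value of a (non-final) location weight. -/
def wL (G : SPTG) : ℝ :=
  ⨆ ℓ : G.Loc, if G.isFin ℓ then 0 else |(G.locWt ℓ : ℝ)|

/-- `w_F`: the largest absolute value of a final cost function on `[0,r]`. -/
def wF (G : SPTG) : ℝ :=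
  ⨆ ℓ : G.Loc, if G.isFin ℓ then max |G.finalCost ℓ 0| |G.finalCost ℓ G.r| else 0

/-- Slope of the value function of location `ℓ` between clock values `ν₁` and `ν₂`. -/
def slope (G : SPTG) (ℓ : G.Loc) (ν₁ ν₂ : ℝ) : ℝ :=
  ((G.val ℓ ν₂).toReal - (G.val ℓ ν₁).toReal) / (ν₂ - ν₁)

/-- A game is finitely optimal if Min has a fake-optimal NC-strategy, Max has an
optimal FP-strategy, and all value functions are cost functions. -/
def finitelyOptimal (G : SPTG) : Prop :=
  (∃ σ : FPStrategy G, σ.isNC ∧ ∀ s : G.Conf, G.validConf s → σ.fakeVal s = G.val s.1 s.2) ∧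
  (∃ σ : FPStrategy G, σ.legalMax ∧ ∀ s : G.Conf, G.validConf s → σ.maxCost s = G.val s.1 s.2) ∧
  ∀ ℓ : G.Loc, CostFunctionOn (G.val ℓ) 0 G.r

end SPTG

/-!
If the owner of a non-urgent location `ℓ₀` first waits `d`, a play from `(ℓ₀, ν)` becomes a
play from `(ℓ₀, ν + d)` whose first delay is longer by `d`, and its price grows by exactly
`d * π(ℓ₀)`. So every strategy of the owner from `(ℓ₀, ν + d)` can be replayed from `(ℓ₀, ν)`,
and every strategy of the opponent, who does not move first, from `(ℓ₀, ν)` can be replayed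
from `(ℓ₀, ν + d)`; the resulting plays correspond move by move. For Min this gives
`Val(ℓ₀, ν) ≤ d * π(ℓ₀) + Val(ℓ₀, ν + d)`, for Max the reverse inequality, and these are the
two slope bounds.
-/

def EReal.addCoeOrderIso (c : ℝ) : EReal ≃o EReal where
  toFun x := c + x
  invFun x := ((-c : ℝ) : EReal) + x
  left_inv x := by
    simp only [← add_assoc, ← EReal.coe_add, neg_add_cancel, EReal.coe_zero, zero_add]
  right_inv x := by
    simp only [← add_assoc, ← EReal.coe_add, add_neg_cancel, EReal.coe_zero, zero_add]
  map_rel_iff' := (EReal.addLECancellable_coe c).add_le_add_iff_left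

lemma EReal.coe_add_iInf {ι : Sort*} (c : ℝ) (f : ι → EReal) :
    (c : EReal) + ⨅ i, f i = ⨅ i, (c : EReal) + f i :=
  (EReal.addCoeOrderIso c).map_iInf f

lemma EReal.coe_add_iSup {ι : Sort*} (c : ℝ) (f : ι → EReal) :
    (c : EReal) + ⨆ i, f i = ⨆ i, (c : EReal) + f i :=
  (EReal.addCoeOrderIso c).map_iSup f

namespace SPTG

variable {G : SPTG}

lemma not_isFin_of_isMin {ℓ : G.Loc} (h : G.isMin ℓ) : ¬G.isFin ℓ := by
  rcases G.partition ℓ with h' | h' | h' <;> tauto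

lemma not_isMax_of_isMin {ℓ : G.Loc} (h : G.isMin ℓ) : ¬G.isMax ℓ := by
  rcases G.partition ℓ with h' | h' | h' <;> tauto

lemma not_isFin_of_isMax {ℓ : G.Loc} (h : G.isMax ℓ) : ¬G.isFin ℓ := by
  rcases G.partition ℓ with h' | h' | h' <;> tauto

lemma not_isMin_of_isMax {ℓ : G.Loc} (h : G.isMax ℓ) : ¬G.isMin ℓ := by
  rcases G.partition ℓ with h' | h' | h' <;> tauto

lemma deadlock_of_isFin {s : G.Conf} (h : G.isFin s.1) : G.deadlock s :=
  fun ⟨_, hm⟩ => G.trans_not_fin _ _ hm.2.2.1 h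

lemma deadlock_iff_forall_not_trans {s : G.Conf} (hs : s.2 ≤ G.r) :
    G.deadlock s ↔ ∀ ℓ', ¬G.trans s.1 ℓ' := by
  refine ⟨fun hd ℓ' htr => hd ⟨⟨0, ℓ'⟩, le_rfl, by simpa using hs, htr, fun _ => rfl⟩, ?_⟩
  rintro h ⟨m, hm⟩
  exact h m.tgt hm.2.2.1

lemma deadlock_iff_of_le_r {ℓ : G.Loc} {ν ν' : ℝ} (h : ν ≤ G.r) (h' : ν' ≤ G.r) :
    G.deadlock (ℓ, ν) ↔ G.deadlock (ℓ, ν') := by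
  rw [deadlock_iff_forall_not_trans h, deadlock_iff_forall_not_trans h']

lemma validConf_applyMove {s : G.Conf} {m : G.Move} (hs : G.validConf s) (hm : G.canMove s m) :
    G.validConf (G.applyMove s m) :=
  ⟨add_nonneg hs.1 hm.1, hm.2.1⟩

lemma validFrom_append {s : G.Conf} {l : List G.Move} {m : G.Move}
    (hl : G.ValidFrom s l) (hm : G.canMove (G.endConf s l) m) : G.ValidFrom s (l ++ [m]) := by
  induction l generalizing s with
  | nil => exact ⟨hm, trivial⟩
  | cons a l ih => exact ⟨hl.1, ih hl.2 hm⟩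

lemma validFrom_hist (σ : MinStrategy G) (τ : MaxStrategy G) {s : G.Conf} (hs : G.validConf s)
    (n : ℕ) : G.ValidFrom s (G.hist σ τ s n) := by
  induction n with
  | zero => trivial
  | succ n ih =>
    set l := G.hist σ τ s n
    change G.ValidFrom s (G.step σ τ s l)
    unfold step
    split_ifs with hd hmin
    · exact ih
    · obtain ⟨m, hm, hcan⟩ := σ.legal s l hs ih hmin hd
      simpa only [hm] using validFrom_append ih hcan
    · have hmax : G.isMax (G.endConf s l).1 := by
        rcases G.partition (G.endConf s l).1 with h | h | h
        exacts [absurd h.1 hmin, h.2.1, absurd (deadlock_of_isFin h.2.2) hd]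
      obtain ⟨m, hm, hcan⟩ := τ.legal s l hs ih hmax hd
      simpa only [hm] using validFrom_append ih hcan

def Move.delayed (d : ℝ) (m : G.Move) : G.Move := ⟨m.t + d, m.tgt⟩

@[simp] lemma Move.delayed_delayed_neg (d : ℝ) (m : G.Move) : (m.delayed d).delayed (-d) = m := by
  simp [Move.delayed]

@[simp] lemma Move.delayed_neg_delayed (d : ℝ) (m : G.Move) : (m.delayed (-d)).delayed d = m := by
  simp [Move.delayed]

section Delay

variable {ℓ : G.Loc} {ν d : ℝ}

lemma applyMove_delayed (m : G.Move) :
    G.applyMove (ℓ, ν) (m.delayed d) = G.applyMove (ℓ, ν + d) m := by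
  simp only [applyMove, Move.delayed, Prod.mk.injEq, true_and]
  ring

lemma endConf_delayed_cons (m : G.Move) (l : List G.Move) :
    G.endConf (ℓ, ν) (m.delayed d :: l) = G.endConf (ℓ, ν + d) (m :: l) := by
  simp only [endConf, List.foldl_cons, applyMove_delayed]

lemma fst_endConf_modifyHead_delayed (l : List G.Move) :
    (G.endConf (ℓ, ν) (l.modifyHead (Move.delayed d))).1 = (G.endConf (ℓ, ν + d) l).1 := by
  cases l with
  | nil => rfl
  | cons m l => rw [List.modifyHead_cons, endConf_delayed_cons]

lemma canMove_delayed (hurg : ¬G.isUrg ℓ) (hd : 0 ≤ d) {m : G.Move}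
    (hm : G.canMove (ℓ, ν + d) m) : G.canMove (ℓ, ν) (m.delayed d) := by
  obtain ⟨ht, hr, htr, -⟩ := hm
  refine ⟨add_nonneg ht hd, ?_, htr, fun h => absurd h hurg⟩
  simp only [Move.delayed] at hr ⊢
  linarith

lemma validFrom_delayed_cons (hurg : ¬G.isUrg ℓ) (hd : 0 ≤ d) {m : G.Move} {l : List G.Move}
    (h : G.ValidFrom (ℓ, ν + d) (m :: l)) : G.ValidFrom (ℓ, ν) (m.delayed d :: l) :=
  ⟨canMove_delayed hurg hd h.1, by rw [applyMove_delayed]; exact h.2⟩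

lemma finPrice_modifyHead_delayed {l : List G.Move} (hl : l ≠ []) :
    G.finPrice (ℓ, ν) (l.modifyHead (Move.delayed d)) =
      d * G.locWt ℓ + G.finPrice (ℓ, ν + d) l := by
  obtain ⟨m, l, rfl⟩ := List.exists_cons_of_ne_nil hl
  simp only [List.modifyHead_cons, finPrice, applyMove_delayed]
  simp only [moveCost, Move.delayed]
  ring

end Delay

def LegalFor (G : SPTG) (P : G.Loc → Prop) (f : G.Conf → List G.Move → Option G.Move) : Prop :=
  ∀ s l, G.validConf s → G.ValidFrom s l → P (G.endConf s l).1 →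
    ¬G.deadlock (G.endConf s l) → ∃ m, f s l = some m ∧ G.canMove (G.endConf s l) m

section Transfer

variable (ℓ₀ : G.Loc) (ν d : ℝ)

/-- From `(ℓ₀, ν)`, play as `f` does from `(ℓ₀, ν + d)` once the first move has waited
the extra time `d`. -/
def movesFromLater (f : G.Conf → List G.Move → Option G.Move) :
    G.Conf → List G.Move → Option G.Move := fun s l =>
  if s = (ℓ₀, ν) then
    match l with
    | [] => (f (ℓ₀, ν + d) []).map (Move.delayed d)
    | m :: l' =>
      if G.canMove (ℓ₀, ν + d) (m.delayed (-d)) then f (ℓ₀, ν + d) (m.delayed (-d) :: l')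
      -- a first move waiting less than `d` has no counterpart from `(ℓ₀, ν + d)`: restart `f`
      -- after it, only to stay legal
      else f (G.applyMove (ℓ₀, ν) m) l'
  else f s l

def movesFromEarlier (f : G.Conf → List G.Move → Option G.Move) :
    G.Conf → List G.Move → Option G.Move := fun s l =>
  if s = (ℓ₀, ν + d) then
    match l with
    | [] => (f (ℓ₀, ν) []).map (Move.delayed (-d))
    | m :: l' => f (ℓ₀, ν) (m.delayed d :: l')
  else f s l

def ShiftedMoves (f₁ f₂ : G.Conf → List G.Move → Option G.Move) : Prop :=
  f₁ (ℓ₀, ν) [] = (f₂ (ℓ₀, ν + d) []).map (Move.delayed d) ∧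
    ∀ m l, G.canMove (ℓ₀, ν + d) m → f₁ (ℓ₀, ν) (m.delayed d :: l) = f₂ (ℓ₀, ν + d) (m :: l)

lemma shiftedMoves_movesFromLater (f : G.Conf → List G.Move → Option G.Move) :
    ShiftedMoves ℓ₀ ν d (movesFromLater ℓ₀ ν d f) f :=
  ⟨by simp [movesFromLater], fun m l hm => by simp [movesFromLater, hm]⟩

lemma shiftedMoves_movesFromEarlier (f : G.Conf → List G.Move → Option G.Move) :
    ShiftedMoves ℓ₀ ν d f (movesFromEarlier ℓ₀ ν d f) :=
  ⟨by simp [movesFromEarlier, Option.map_map, Function.comp_def], fun m l _ => by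
    simp [movesFromEarlier]⟩

variable {ℓ₀ ν d} {P : G.Loc → Prop} {f : G.Conf → List G.Move → Option G.Move}

lemma legalFor_movesFromLater (h0 : 0 ≤ ν) (hd : 0 ≤ d) (hr : ν + d ≤ G.r)
    (hurg : ¬G.isUrg ℓ₀) (hf : G.LegalFor P f) : G.LegalFor P (movesFromLater ℓ₀ ν d f) := by
  have hν : G.validConf (ℓ₀, ν) := ⟨h0, by linarith⟩
  have hνd : G.validConf (ℓ₀, ν + d) := ⟨add_nonneg h0 hd, hr⟩
  intro s l hs hl hP hdead
  by_cases hs₀ : s = (ℓ₀, ν)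
  swap
  · obtain ⟨m, hm, hcan⟩ := hf s l hs hl hP hdead
    exact ⟨m, by simp [movesFromLater, hs₀, hm], hcan⟩
  subst hs₀
  match l with
  | [] =>
    have hdead' : ¬G.deadlock (ℓ₀, ν + d) := by rwa [← deadlock_iff_of_le_r hν.2 hr]
    obtain ⟨m, hm, hcan⟩ := hf _ [] hνd trivial hP hdead'
    exact ⟨m.delayed d, by simp [movesFromLater, hm], canMove_delayed hurg hd hcan⟩
  | m :: l' =>
    by_cases hm : G.canMove (ℓ₀, ν + d) (m.delayed (-d))
    · have hend : G.endConf (ℓ₀, ν + d) (m.delayed (-d) :: l') = G.endConf (ℓ₀, ν) (m :: l') := by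
        rw [← endConf_delayed_cons, Move.delayed_neg_delayed]
      have hl' : G.ValidFrom (ℓ₀, ν + d) (m.delayed (-d) :: l') :=
        ⟨hm, by rw [← applyMove_delayed, Move.delayed_neg_delayed]; exact hl.2⟩
      obtain ⟨m', hm', hcan⟩ := hf _ _ hνd hl' (hend ▸ hP) (hend ▸ hdead)
      exact ⟨m', by simpa [movesFromLater, hm] using hm', hend ▸ hcan⟩
    · obtain ⟨m', hm', hcan⟩ := hf _ l' (validConf_applyMove hν hl.1) hl.2 hP hdead
      exact ⟨m', by simpa [movesFromLater, hm] using hm', hcan⟩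

lemma legalFor_movesFromEarlier (h0 : 0 ≤ ν) (hd : 0 ≤ d) (hr : ν + d ≤ G.r)
    (hurg : ¬G.isUrg ℓ₀) (hP₀ : ¬P ℓ₀) (hf : G.LegalFor P f) :
    G.LegalFor P (movesFromEarlier ℓ₀ ν d f) := by
  intro s l hs hl hP hdead
  by_cases hs₀ : s = (ℓ₀, ν + d)
  swap
  · obtain ⟨m, hm, hcan⟩ := hf s l hs hl hP hdead
    exact ⟨m, by simp [movesFromEarlier, hs₀, hm], hcan⟩
  subst hs₀
  match l with
  | [] => exact absurd hP hP₀
  | m :: l' =>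
    have hend := endConf_delayed_cons (ℓ := ℓ₀) (ν := ν) (d := d) m l'
    obtain ⟨m', hm', hcan⟩ := hf _ _ ⟨h0, by linarith⟩ (validFrom_delayed_cons hurg hd hl)
      (hend ▸ hP) (hend ▸ hdead)
    exact ⟨m', by simpa [movesFromEarlier] using hm', hend ▸ hcan⟩

end Transfer

section Correspondence

variable {ℓ₀ : G.Loc} {ν d : ℝ} {σ₁ σ₂ : MinStrategy G} {τ₁ τ₂ : MaxStrategy G}

lemma step_modifyHead_delayed (hd : 0 ≤ d) (hr : ν + d ≤ G.r)
    (hσ : ShiftedMoves ℓ₀ ν d σ₁.move σ₂.move) (hτ : ShiftedMoves ℓ₀ ν d τ₁.move τ₂.move)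
    {l : List G.Move} (hl : G.ValidFrom (ℓ₀, ν + d) l) :
    G.step σ₁ τ₁ (ℓ₀, ν) (l.modifyHead (Move.delayed d)) =
      (G.step σ₂ τ₂ (ℓ₀, ν + d) l).modifyHead (Move.delayed d) := by
  cases l with
  | nil =>
    have hdead : G.deadlock (ℓ₀, ν) ↔ G.deadlock (ℓ₀, ν + d) :=
      deadlock_iff_of_le_r (by linarith) hr
    simp only [List.modifyHead_nil, step, endConf, List.foldl_nil, hdead, hσ.1, hτ.1]
    by_cases hdl : G.deadlock (ℓ₀, ν + d)
    · simp [hdl]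
    by_cases hmin : G.isMin ℓ₀
    · simp only [hdl, hmin, if_true, if_false]
      cases σ₂.move (ℓ₀, ν + d) [] <;> rfl
    · simp only [hdl, hmin, if_false]
      cases τ₂.move (ℓ₀, ν + d) [] <;> rfl
  | cons m l =>
    simp only [List.modifyHead_cons, step, endConf_delayed_cons, hσ.2 m l hl.1, hτ.2 m l hl.1]
    by_cases hdl : G.deadlock (G.endConf (ℓ₀, ν + d) (m :: l))
    · simp [hdl]
    by_cases hmin : G.isMin (G.endConf (ℓ₀, ν + d) (m :: l)).1
    · simp only [hdl, hmin, if_true, if_false]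
      cases σ₂.move (ℓ₀, ν + d) (m :: l) <;> rfl
    · simp only [hdl, hmin, if_false]
      cases τ₂.move (ℓ₀, ν + d) (m :: l) <;> rfl

lemma hist_eq_modifyHead_delayed (h0 : 0 ≤ ν) (hd : 0 ≤ d) (hr : ν + d ≤ G.r)
    (hσ : ShiftedMoves ℓ₀ ν d σ₁.move σ₂.move) (hτ : ShiftedMoves ℓ₀ ν d τ₁.move τ₂.move)
    (n : ℕ) :
    G.hist σ₁ τ₁ (ℓ₀, ν) n = (G.hist σ₂ τ₂ (ℓ₀, ν + d) n).modifyHead (Move.delayed d) := by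
  induction n with
  | zero => rfl
  | succ n ih =>
    rw [hist, hist, ih]
    exact step_modifyHead_delayed hd hr hσ hτ (validFrom_hist σ₂ τ₂ ⟨add_nonneg h0 hd, hr⟩ n)

lemma playCost_eq_add (h0 : 0 ≤ ν) (hd : 0 ≤ d) (hr : ν + d ≤ G.r) (hnf : ¬G.isFin ℓ₀)
    (hσ : ShiftedMoves ℓ₀ ν d σ₁.move σ₂.move) (hτ : ShiftedMoves ℓ₀ ν d τ₁.move τ₂.move) :
    G.playCost (ℓ₀, ν) σ₁ τ₁ =
      ((d * G.locWt ℓ₀ : ℝ) : EReal) + G.playCost (ℓ₀, ν + d) σ₂ τ₂ := by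
  have hhist := hist_eq_modifyHead_delayed h0 hd hr hσ hτ
  have hfin : ∀ n, G.isFin (G.endConf (ℓ₀, ν) (G.hist σ₁ τ₁ (ℓ₀, ν) n)).1 ↔
      G.isFin (G.endConf (ℓ₀, ν + d) (G.hist σ₂ τ₂ (ℓ₀, ν + d) n)).1 := fun n => by
    rw [hhist, fst_endConf_modifyHead_delayed]
  unfold playCost
  by_cases h₂ : ∃ n, G.isFin (G.endConf (ℓ₀, ν + d) (G.hist σ₂ τ₂ (ℓ₀, ν + d) n)).1
  · have h₁ := h₂.imp fun n => (hfin n).2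
    have hne : G.hist σ₂ τ₂ (ℓ₀, ν + d) (Nat.find h₂) ≠ [] := by
      intro hnil
      have hfin₂ := Nat.find_spec h₂
      rw [hnil] at hfin₂
      exact hnf hfin₂
    rw [dif_pos h₁, dif_pos h₂, Nat.find_congr' (hp := h₁) (hq := h₂) (hfin _), hhist,
      finPrice_modifyHead_delayed hne, EReal.coe_add]
  · rw [dif_neg fun h₁ => h₂ (h₁.imp fun n => (hfin n).1), dif_neg h₂, EReal.coe_add_top]

end Correspondence

section Value

variable {ℓ₀ : G.Loc} {ν d : ℝ}

lemma val_le_add_val_of_isMin (hmin : G.isMin ℓ₀) (hurg : ¬G.isUrg ℓ₀) (h0 : 0 ≤ ν)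
    (hd : 0 ≤ d) (hr : ν + d ≤ G.r) :
    G.val ℓ₀ ν ≤ ((d * G.locWt ℓ₀ : ℝ) : EReal) + G.val ℓ₀ (ν + d) := by
  rw [val, val, upperVal, upperVal, EReal.coe_add_iInf]
  refine le_iInf fun σ => ?_
  let σ' : MinStrategy G :=
    ⟨movesFromLater ℓ₀ ν d σ.move, legalFor_movesFromLater h0 hd hr hurg σ.legal⟩
  refine (iInf_le _ σ').trans (iSup_le fun τ => ?_)
  let τ' : MaxStrategy G := ⟨movesFromEarlier ℓ₀ ν d τ.move,
    legalFor_movesFromEarlier h0 hd hr hurg (not_isMax_of_isMin hmin) τ.legal⟩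
  rw [playCost_eq_add (σ₂ := σ) (τ₂ := τ') h0 hd hr (not_isFin_of_isMin hmin)
    (shiftedMoves_movesFromLater ..) (shiftedMoves_movesFromEarlier ..)]
  exact add_le_add_right (le_iSup (G.playCost (ℓ₀, ν + d) σ) τ') _

lemma add_val_le_val_of_isMax (hmax : G.isMax ℓ₀) (hurg : ¬G.isUrg ℓ₀) (h0 : 0 ≤ ν)
    (hd : 0 ≤ d) (hr : ν + d ≤ G.r) :
    ((d * G.locWt ℓ₀ : ℝ) : EReal) + G.val ℓ₀ (ν + d) ≤ G.val ℓ₀ ν := by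
  rw [val, val, upperVal, upperVal]
  refine le_iInf fun σ => ?_
  let σ' : MinStrategy G := ⟨movesFromEarlier ℓ₀ ν d σ.move,
    legalFor_movesFromEarlier h0 hd hr hurg (not_isMin_of_isMax hmax) σ.legal⟩
  refine (add_le_add_right (iInf_le (fun σ => ⨆ τ, G.playCost (ℓ₀, ν + d) σ τ) σ') _).trans ?_
  rw [EReal.coe_add_iSup]
  refine iSup_le fun τ => ?_
  let τ' : MaxStrategy G :=
    ⟨movesFromLater ℓ₀ ν d τ.move, legalFor_movesFromLater h0 hd hr hurg τ.legal⟩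
  rw [← playCost_eq_add (σ₁ := σ) (τ₁ := τ') h0 hd hr (not_isFin_of_isMax hmax)
    (shiftedMoves_movesFromEarlier ..) (shiftedMoves_movesFromLater ..)]
  exact le_iSup (G.playCost (ℓ₀, ν) σ) τ'

lemma neg_locWt_le_slope_of_isMin (hmin : G.isMin ℓ₀) (hurg : ¬G.isUrg ℓ₀) (h0 : 0 ≤ ν)
    (hd : 0 < d) (hr : ν + d ≤ G.r) {v₁ v₂ : ℝ} (hv₁ : G.val ℓ₀ ν = v₁)
    (hv₂ : G.val ℓ₀ (ν + d) = v₂) : -(G.locWt ℓ₀ : ℝ) ≤ G.slope ℓ₀ ν (ν + d) := by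
  have h := val_le_add_val_of_isMin hmin hurg h0 hd.le hr
  rw [hv₁, hv₂, ← EReal.coe_add, EReal.coe_le_coe_iff] at h
  rw [slope, hv₁, hv₂, EReal.toReal_coe, EReal.toReal_coe, add_sub_cancel_left, le_div_iff₀ hd]
  linarith

lemma slope_le_neg_locWt_of_isMax (hmax : G.isMax ℓ₀) (hurg : ¬G.isUrg ℓ₀) (h0 : 0 ≤ ν)
    (hd : 0 < d) (hr : ν + d ≤ G.r) {v₁ v₂ : ℝ} (hv₁ : G.val ℓ₀ ν = v₁)
    (hv₂ : G.val ℓ₀ (ν + d) = v₂) : G.slope ℓ₀ ν (ν + d) ≤ -(G.locWt ℓ₀ : ℝ) := by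
  have h := add_val_le_val_of_isMax hmax hurg h0 hd.le hr
  rw [hv₁, hv₂, ← EReal.coe_add, EReal.coe_le_coe_iff] at h
  rw [slope, hv₁, hv₂, EReal.toReal_coe, EReal.toReal_coe, add_sub_cancel_left, div_le_iff₀ hd]
  linarith

end Value

end SPTG

open SPTG in
theorem value_slope_bounds_general (G : SPTG)
    (hfin : ∀ ℓ : G.Loc, ∀ ν : ℝ, 0 ≤ ν → ν ≤ G.r → ∃ v : ℝ, G.val ℓ ν = (v : EReal))
    (ℓ ℓ' : G.Loc)
    (hℓ : G.isMin ℓ ∧ ¬G.isUrg ℓ ∧ ¬G.isFin ℓ)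
    (hℓ' : G.isMax ℓ' ∧ ¬G.isUrg ℓ' ∧ ¬G.isFin ℓ') :
    ∀ ν₁ ν₂ : ℝ, 0 ≤ ν₁ → ν₁ < ν₂ → ν₂ ≤ G.r →
      -(G.locWt ℓ : ℝ) ≤ G.slope ℓ ν₁ ν₂ ∧ G.slope ℓ' ν₁ ν₂ ≤ -(G.locWt ℓ' : ℝ) := by
  intro ν₁ ν₂ h0 hlt hr
  obtain ⟨d, hd, rfl⟩ : ∃ d, 0 < d ∧ ν₂ = ν₁ + d := ⟨ν₂ - ν₁, sub_pos.2 hlt, by ring⟩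
  have hν₁ : ν₁ ≤ G.r := by linarith
  have hν₂ : 0 ≤ ν₁ + d := by linarith
  obtain ⟨v₁, hv₁⟩ := hfin ℓ ν₁ h0 hν₁
  obtain ⟨v₂, hv₂⟩ := hfin ℓ (ν₁ + d) hν₂ hr
  obtain ⟨v₁', hv₁'⟩ := hfin ℓ' ν₁ h0 hν₁
  obtain ⟨v₂', hv₂'⟩ := hfin ℓ' (ν₁ + d) hν₂ hr
  exact ⟨neg_locWt_le_slope_of_isMin hℓ.1 hℓ.2.1 h0 hd hr hv₁ hv₂,
    slope_le_neg_locWt_of_isMax hℓ'.1 hℓ'.2.1 h0 hd hr hv₁' hv₂'⟩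

open SPTG in
/-- **Lemma: slopes of value functions.** In an `r`-SPTG with finite
values, if `ℓ` is a non-urgent non-final location of Min and `ℓ'` one of Max, then
for all `0 ≤ ν < ν' ≤ r` the slope of `Val_G(ℓ)` between `ν` and `ν'` is at least
`-π(ℓ)` and the slope of `Val_G(ℓ')` is at most `-π(ℓ')`. -/
theorem value_slope_bounds (G : SPTG) (hq : ∃ q : ℚ, G.r = (q : ℝ)) (hrat : G.ratFinal)
    (hfin : ∀ ℓ : G.Loc, ∀ ν : ℝ, 0 ≤ ν → ν ≤ G.r → ∃ v : ℝ, G.val ℓ ν = (v : EReal))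
    (ℓ ℓ' : G.Loc)
    (hℓ : G.isMin ℓ ∧ ¬G.isUrg ℓ ∧ ¬G.isFin ℓ)
    (hℓ' : G.isMax ℓ' ∧ ¬G.isUrg ℓ' ∧ ¬G.isFin ℓ') :
    ∀ ν₁ ν₂ : ℝ, 0 ≤ ν₁ → ν₁ < ν₂ → ν₂ ≤ G.r →
      -(G.locWt ℓ : ℝ) ≤ G.slope ℓ ν₁ ν₂ ∧ G.slope ℓ' ν₁ ν₂ ≤ -(G.locWt ℓ' : ℝ) :=
  value_slope_bounds_general G hfin ℓ ℓ' hℓ hℓ'
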